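/- The restriction of B to the tangent plane equals (g/ρ²) times the Weingarten map: for every tangent vector Y = Σ_c Y^c e_c one has B(Y) = (g/ρ²) Σ_{c,b} Y^c W^b_c e_b; equivalently, B(e_c) = (g/ρ²) Σ_b W^b_c e_b for c = 1,2. -/

import Mathlib

open scoped BigOperators

noncomputable def pd (a : Fin 2) (f : ℝ × ℝ → ℝ) (u : ℝ × ℝ) : ℝ :=
  fderiv ℝ f u (if a = 0 then (1, 0) else (0, 1))

noncomputable def pb (ρ f h : ℝ × ℝ → ℝ) (u : ℝ × ℝ) : ℝ :=
  (1 / ρ u) * (pd 0 f u * pd 1 h u - pd 1 f u * pd 0 h u)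

noncomputable def vpd {m : ℕ} (F : ℝ × ℝ → Fin m → ℝ) (a : Fin 2) (u : ℝ × ℝ) : Fin m → ℝ :=
  fun i => pd a (fun v => F v i) u

noncomputable def dot {m : ℕ} (X Y : Fin m → ℝ) : ℝ := ∑ i, X i * Y i

noncomputable def gmat {m : ℕ} (x : ℝ × ℝ → Fin m → ℝ) (u : ℝ × ℝ) : Matrix (Fin 2) (Fin 2) ℝ :=
  Matrix.of fun a b => dot (vpd x a u) (vpd x b u)

noncomputable def Pmap {m : ℕ} (ρ : ℝ × ℝ → ℝ) (x : ℝ × ℝ → Fin m → ℝ) (u : ℝ × ℝ)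
    (X : Fin m → ℝ) : Fin m → ℝ :=
  fun i => ∑ j, pb ρ (fun v => x v i) (fun v => x v j) u * X j

noncomputable def Smap {m : ℕ} (ρ : ℝ × ℝ → ℝ) (x N : ℝ × ℝ → Fin m → ℝ) (u : ℝ × ℝ)
    (X : Fin m → ℝ) : Fin m → ℝ :=
  fun i => ∑ j, pb ρ (fun v => x v i) (fun v => N v j) u * X j

noncomputable def STmap {m : ℕ} (ρ : ℝ × ℝ → ℝ) (x N : ℝ × ℝ → Fin m → ℝ) (u : ℝ × ℝ)
    (X : Fin m → ℝ) : Fin m → ℝ :=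
  fun j => ∑ i, X i * pb ρ (fun v => x v i) (fun v => N v j) u

noncomputable def Bmap {m : ℕ} (ρ : ℝ × ℝ → ℝ) (x N : ℝ × ℝ → Fin m → ℝ) (u : ℝ × ℝ)
    (X : Fin m → ℝ) : Fin m → ℝ :=
  Pmap ρ x u (Smap ρ x N u X)

noncomputable def Amap {m : ℕ} (ρ : ℝ × ℝ → ℝ) (x N : ℝ × ℝ → Fin m → ℝ) (u : ℝ × ℝ)
    (X : Fin m → ℝ) : Fin m → ℝ :=
  fun i => -(Pmap ρ x u (STmap ρ x N u X) i)

noncomputable def hmat {m : ℕ} (x N : ℝ × ℝ → Fin m → ℝ) (u : ℝ × ℝ) : Matrix (Fin 2) (Fin 2) ℝ :=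
  Matrix.of fun a b => -(dot (vpd x a u) (vpd N b u))

noncomputable def Wmap {m : ℕ} (x N : ℝ × ℝ → Fin m → ℝ) (u : ℝ × ℝ) (a b : Fin 2) : ℝ :=
  ∑ c, (gmat x u)⁻¹ a c * hmat x N u c b

noncomputable def eps2 : Fin 2 → Fin 2 → ℝ := fun a b =>
  if a = 0 ∧ b = 1 then 1 else if a = 1 ∧ b = 0 then -1 else 0

noncomputable def lc {n : ℕ} (f : Fin n → Fin n) : ℝ :=
  if h : Function.Bijective f then ((Equiv.Perm.sign (Equiv.ofBijective f h) : ℤ) : ℝ) else 0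

def tuple3 {α : Type*} {q : ℕ} (i k l : α) (I : Fin q → α) : Fin (q + 3) → α :=
  Fin.cons i (Fin.cons k (Fin.cons l I))

noncomputable def Zvec {q : ℕ} (ρ : ℝ × ℝ → ℝ) (x : ℝ × ℝ → Fin (q + 3) → ℝ) (u : ℝ × ℝ)
    (I : Fin q → Fin (q + 3)) : Fin (q + 3) → ℝ :=
  fun i => (ρ u / (2 * Real.sqrt ((gmat x u).det * (Nat.factorial q)))) *
    ∑ k, ∑ l, lc (tuple3 i k l I) * pb ρ (fun v => x v k) (fun v => x v l) u

section Helpers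

def dir (a : Fin 2) : ℝ × ℝ := if a = 0 then (1, 0) else (0, 1)

lemma pd_diff {f : ℝ × ℝ → ℝ} {u : ℝ × ℝ} (hf : ContDiffAt ℝ (⊤ : ℕ∞) f u) (a : Fin 2) :
    DifferentiableAt ℝ (pd a f) u :=
  ((hf.fderiv_right (m := 1) (WithTop.coe_le_coe.mpr le_top)).differentiableAt one_ne_zero).clm_apply
    (differentiableAt_const _)

lemma pd_comm {f : ℝ × ℝ → ℝ} {u : ℝ × ℝ} (hf : ContDiffAt ℝ (⊤ : ℕ∞) f u) (a b : Fin 2) :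
    pd b (pd a f) u = pd a (pd b f) u := by
  have hdf : DifferentiableAt ℝ (fderiv ℝ f) u :=
    (hf.fderiv_right (m := 1) (WithTop.coe_le_coe.mpr le_top)).differentiableAt one_ne_zero
  have key : ∀ c d : Fin 2, pd d (pd c f) u = fderiv ℝ (fderiv ℝ f) u (dir d) (dir c) := by
    intro c d
    have h1 : pd d (pd c f) u = fderiv ℝ (fun v => (fderiv ℝ f v) (dir c)) u (dir d) := rfl
    rw [h1, fderiv_clm_apply hdf (differentiableAt_const _)]
    simp
  rw [key, key]
  exact (hf.isSymmSndFDerivAt (by simp; exact WithTop.coe_le_coe.mpr le_top)).eq _ _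

lemma sum_mul_dot {m : ℕ} (c p q : ℝ) (v w X : Fin m → ℝ) :
    ∑ k, (c * (p * v k - q * w k)) * X k = c * (p * dot v X - q * dot w X) := by
  simp only [dot, mul_sub, sub_mul, Finset.sum_sub_distrib, Finset.mul_sum]
  congr 1 <;> exact Finset.sum_congr rfl fun k _ => by ring

lemma dot_formula {m : ℕ} (c A B : ℝ) (ea v w : Fin m → ℝ) :
    (∑ j, ea j * (c * (v j * A - w j * B))) = c * (dot ea v * A - dot ea w * B) := by
  simp only [dot, mul_sub, sub_mul, Finset.sum_sub_distrib, Finset.mul_sum, Finset.sum_mul]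
  congr 1 <;> exact Finset.sum_congr rfl fun k _ => by ring

lemma dot_comm {m : ℕ} (X Y : Fin m → ℝ) : dot X Y = dot Y X := by
  simp [dot, mul_comm]

end Helpers

theorem statement6 (U : Set (ℝ × ℝ)) (hU : IsOpen U) (p : ℕ) (hp : 1 ≤ p)
    (ρ : ℝ × ℝ → ℝ) (hρ : ContDiffOn ℝ (⊤ : ℕ∞) ρ U) (hρ0 : ∀ u ∈ U, ρ u ≠ 0)
    (x : ℝ × ℝ → Fin (p + 2) → ℝ) (hx : ContDiffOn ℝ (⊤ : ℕ∞) x U)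
    (hind : ∀ u ∈ U, LinearIndependent ℝ ![vpd x 0 u, vpd x 1 u])
    (hg : ∀ u ∈ U, 0 < (gmat x u).det)
    (N : ℝ × ℝ → Fin (p + 2) → ℝ) (hN : ContDiffOn ℝ (⊤ : ℕ∞) N U)
    (hNt : ∀ u ∈ U, ∀ a : Fin 2, dot (N u) (vpd x a u) = 0)
    (hNn : ∀ u ∈ U, dot (N u) (N u) = 1) :
    ∀ u ∈ U,
      (∀ Y : Fin 2 → ℝ, ∀ i,
        Bmap ρ x N u (fun j => ∑ c, Y c * vpd x c u j) i =
          ((gmat x u).det / (ρ u) ^ 2) * ∑ c, ∑ b, Y c * Wmap x N u b c * vpd x b u i) ∧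
      (∀ c : Fin 2, ∀ i,
        Bmap ρ x N u (vpd x c u) i =
          ((gmat x u).det / (ρ u) ^ 2) * ∑ b, Wmap x N u b c * vpd x b u i) := by
  intro u hu
  have hmem : U ∈ nhds u := hU.mem_nhds hu
  have hxC : ∀ i, ContDiffAt ℝ (⊤ : ℕ∞) (fun v => x v i) u := fun i =>
    contDiffAt_pi.mp (hx.contDiffAt hmem) i
  have hNC : ∀ i, ContDiffAt ℝ (⊤ : ℕ∞) (fun v => N v i) u := fun i =>
    contDiffAt_pi.mp (hN.contDiffAt hmem) i
  have hr : ρ u ≠ 0 := hρ0 u hu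
  have hdet : (gmat x u).det ≠ 0 := (hg u hu).ne'
  -- tangency identity
  have htan : ∀ a b : Fin 2, dot (vpd x a u) (vpd N b u)
      = -∑ i, N u i * pd b (pd a (fun v => x v i)) u := by
    intro a b
    have hG : (fun v => ∑ i, N v i * pd a (fun w => x w i) v) =ᶠ[nhds u] fun _ => (0:ℝ) := by
      filter_upwards [hmem] with v hv
      simpa [dot, vpd] using hNt v hv a
    have h0 : fderiv ℝ (fun v => ∑ i, N v i * pd a (fun w => x w i) v) u = 0 := by
      rw [hG.fderiv_eq]; exact fderiv_const_apply 0
    have hdp : ∀ i : Fin (p+2),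
        DifferentiableAt ℝ (fun v => N v i * pd a (fun w => x w i) v) u :=
      fun i => ((hNC i).differentiableAt (by simp)).mul (pd_diff (hxC i) a)
    have hsum : fderiv ℝ (fun v => ∑ i, N v i * pd a (fun w => x w i) v) u
        = ∑ i, fderiv ℝ (fun v => N v i * pd a (fun w => x w i) v) u :=
      fderiv_fun_sum fun i _ => hdp i
    have h1 : (0:ℝ) = ∑ i, (fderiv ℝ (fun v => N v i * pd a (fun w => x w i) v) u) (dir b) := by
      rw [← ContinuousLinearMap.sum_apply, ← hsum, h0]; rfl
    have h2 : ∀ i : Fin (p+2),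
        (fderiv ℝ (fun v => N v i * pd a (fun w => x w i) v) u) (dir b)
        = N u i * pd b (pd a (fun v => x v i)) u
          + pd a (fun v => x v i) u * pd b (fun v => N v i) u := by
      intro i
      rw [fderiv_fun_mul ((hNC i).differentiableAt (by simp)) (pd_diff (hxC i) a)]
      simp only [ContinuousLinearMap.add_apply, ContinuousLinearMap.smul_apply, smul_eq_mul]
      rfl
    have h3 : dot (vpd x a u) (vpd N b u)
        = ∑ i, pd a (fun v => x v i) u * pd b (fun v => N v i) u := rfl
    rw [h3]
    have h4 := h1
    simp only [h2, Finset.sum_add_distrib] at h4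
    linarith
  -- symmetry of the second fundamental form
  have hsym : hmat x N u 1 0 = hmat x N u 0 1 := by
    simp only [hmat, Matrix.of_apply]
    rw [htan 1 0, htan 0 1, neg_inj, neg_inj]
    exact Finset.sum_congr rfl fun i _ => by rw [pd_comm (hxC i) 1 0]
  -- the B formula
  have hS : ∀ X : Fin (p+2) → ℝ, ∀ j, Smap ρ x N u X j
      = (1/ρ u) * (vpd x 0 u j * dot (vpd N 1 u) X - vpd x 1 u j * dot (vpd N 0 u) X) := by
    intro X j
    exact sum_mul_dot (1/ρ u) (vpd x 0 u j) (vpd x 1 u j) (vpd N 1 u) (vpd N 0 u) X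
  have hdotS : ∀ X : Fin (p+2) → ℝ, ∀ ea : Fin (p+2) → ℝ,
      dot ea (Smap ρ x N u X)
      = (1/ρ u) * (dot ea (vpd x 0 u) * dot (vpd N 1 u) X
          - dot ea (vpd x 1 u) * dot (vpd N 0 u) X) := by
    intro X ea
    have : dot ea (Smap ρ x N u X)
        = ∑ j, ea j * ((1/ρ u) * (vpd x 0 u j * dot (vpd N 1 u) X
            - vpd x 1 u j * dot (vpd N 0 u) X)) := by
      refine Finset.sum_congr rfl fun j _ => by rw [hS X j]
    rw [this, dot_formula]
  have hB : ∀ X : Fin (p+2) → ℝ, ∀ i, Bmap ρ x N u X i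
      = (1/ρ u) * (vpd x 0 u i * ((1/ρ u) * (gmat x u 1 0 * dot (vpd N 1 u) X
            - gmat x u 1 1 * dot (vpd N 0 u) X))
        - vpd x 1 u i * ((1/ρ u) * (gmat x u 0 0 * dot (vpd N 1 u) X
            - gmat x u 0 1 * dot (vpd N 0 u) X))) := by
    intro X i
    have h1 : Bmap ρ x N u X i
        = (1/ρ u) * (vpd x 0 u i * dot (vpd x 1 u) (Smap ρ x N u X)
            - vpd x 1 u i * dot (vpd x 0 u) (Smap ρ x N u X)) :=
      sum_mul_dot (1/ρ u) (vpd x 0 u i) (vpd x 1 u i) (vpd x 1 u) (vpd x 0 u)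
        (Smap ρ x N u X)
    rw [h1, hdotS, hdotS]
    rfl
  -- dot with normal derivatives in terms of hmat
  have hdn : ∀ a b : Fin 2, dot (vpd N b u) (vpd x a u) = -(hmat x N u a b) := by
    intro a b
    simp [hmat, dot_comm]
  -- gmat symmetry
  have hgsym : gmat x u 1 0 = gmat x u 0 1 := by
    simp [gmat, dot_comm]
  -- inverse of gmat
  have hinv : (gmat x u)⁻¹
      = ((gmat x u).det)⁻¹ • !![gmat x u 1 1, -(gmat x u 0 1); -(gmat x u 1 0), gmat x u 0 0] := by
    rw [Matrix.inv_def, Matrix.adjugate_fin_two, Ring.inverse_eq_inv]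
  have hW : ∀ b c : Fin 2, Wmap x N u b c
      = ((gmat x u).det)⁻¹ *
        (!![gmat x u 1 1, -(gmat x u 0 1); -(gmat x u 1 0), gmat x u 0 0] b 0 * hmat x N u 0 c
        + !![gmat x u 1 1, -(gmat x u 0 1); -(gmat x u 1 0), gmat x u 0 0] b 1 * hmat x N u 1 c) := by
    intro b c
    simp only [Wmap, Fin.sum_univ_two, hinv, Matrix.smul_apply, smul_eq_mul]
    ring
  have key : ∀ c : Fin 2, ∀ i, Bmap ρ x N u (vpd x c u) i
      = ((gmat x u).det / (ρ u) ^ 2) * ∑ b, Wmap x N u b c * vpd x b u i := by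
    intro c i
    rw [hB, Fin.sum_univ_two, hW 0 c, hW 1 c, hdn c 0, hdn c 1]
    fin_cases c <;>
    · simp only [Fin.zero_eta, Fin.mk_one, Matrix.cons_val', Matrix.cons_val_zero,
        Matrix.cons_val_one, Matrix.head_cons, Matrix.head_fin_const, Matrix.empty_val',
        Matrix.cons_val_fin_one, Fin.isValue, Matrix.of_apply]
      rw [hgsym, hsym]
      field_simp
      ring
  refine ⟨fun Y i => ?_, key⟩
  have hdlin : ∀ v : Fin (p+2) → ℝ, dot v (fun j => ∑ c, Y c * vpd x c u j)
      = Y 0 * dot v (vpd x 0 u) + Y 1 * dot v (vpd x 1 u) := by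
    intro v
    simp only [dot, Fin.sum_univ_two, mul_add, Finset.sum_add_distrib, Finset.mul_sum]
    congr 1 <;> exact Finset.sum_congr rfl fun k _ => by ring
  rw [hB, hdlin, hdlin, hdn 0 0, hdn 0 1, hdn 1 0, hdn 1 1]
  simp only [Fin.sum_univ_two, hW, Matrix.cons_val', Matrix.cons_val_zero, Matrix.cons_val_one,
    Matrix.head_cons, Matrix.head_fin_const, Matrix.empty_val', Matrix.cons_val_fin_one,
    Fin.isValue, Matrix.of_apply]
  rw [hgsym, hsym]
  field_simp
  ring
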